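/- Let ν be a σ_α-invariant Borel probability measure on the full shift Σ_α with ν(K_α) = 1. If ν is fully supported on Σ_α (gives positive measure to every non-empty open subset of Σ_α), then the push-forward measure ψ_α^*(ν) = ν∘ψ_α^{-1} on Σ_D is fully supported on Σ_D (gives positive measure to every non-empty open subset of Σ_D). -/
import Mathlib


open MeasureTheory Topology Filter
open scoped ENNReal NNReal


/-! ### The alphabet of the (M,N) Dyck–Motzkin shift -/

/-- The alphabet `D = D_α ∪ D_0 ∪ D_β` of the `(M,N)` Dyck–Motzkin shift:
`la k` is the left bracket `α_k`, `u k` is the unit `1_k`, `ra k` is the right bracket `β_k`. -/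
inductive DMSym (M N : ℕ) : Type where
  | la : Fin M → DMSym M N
  | u  : Fin N → DMSym M N
  | ra : Fin M → DMSym M N
deriving DecidableEq

namespace DMSym

def equivSum (M N : ℕ) : DMSym M N ≃ (Fin M ⊕ Fin N ⊕ Fin M) where
  toFun s := match s with
    | .la k => Sum.inl k
    | .u k => Sum.inr (Sum.inl k)
    | .ra k => Sum.inr (Sum.inr k)
  invFun s := match s with
    | Sum.inl k => .la k
    | Sum.inr (Sum.inl k) => .u k
    | Sum.inr (Sum.inr k) => .ra k
  left_inv s := by cases s <;> rfl
  right_inv s := by rcases s with k | k | k <;> rfl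

instance (M N : ℕ) : Fintype (DMSym M N) := Fintype.ofEquiv _ (equivSum M N).symm
instance (M N : ℕ) : TopologicalSpace (DMSym M N) := ⊥
instance (M N : ℕ) : DiscreteTopology (DMSym M N) := ⟨rfl⟩
instance (M N : ℕ) : MeasurableSpace (DMSym M N) := ⊤
instance (M N : ℕ) : BorelSpace (DMSym M N) := ⟨borel_eq_top_of_discrete.symm⟩

end DMSym

/-- Nonzero elements of the Dyck–Motzkin monoid with zero are represented in normal form:
`some (bs, as)` is the reduced word `β_{bs(0)} ⋯ β_{bs(r)} α_{as(0)} ⋯ α_{as(s)}`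
(in particular `some ([], [])` is the unit element `1`); `none` is the zero element `0`. -/
abbrev DyckElem (M : ℕ) := Option (List (Fin M) × List (Fin M))

/-- Multiplication, in the Dyck–Motzkin monoid with zero, of an element in normal form on
the right by a generator: units are absorbed, a left bracket is appended, and a right bracket
either closes the last left bracket (if the indices match), is appended (if there is no left
bracket to close), or produces the zero element (if the indices do not match). -/
def dyckStep {M N : ℕ} : DyckElem M → DMSym M N → DyckElem M
  | none, _ => none
  | some (bs, as), .la k => some (bs, as ++ [k])
  | some (bs, as), .u _ => some (bs, as)
  | some (bs, as), .ra k =>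
      match as.getLast? with
      | none => some (bs ++ [k], [])
      | some j => if j = k then some (bs, as.dropLast) else none

/-- `red w` is the image of the word `w` in the Dyck–Motzkin monoid with zero. -/
def red {M N : ℕ} (w : List (DMSym M N)) : DyckElem M :=
  w.foldl dyckStep (some ([], []))

/-- The word `x_j x_{j+1} ⋯ x_k` read off a bi-infinite sequence `x`. -/
def wordAt {M N : ℕ} (x : ℤ → DMSym M N) (j k : ℤ) : List (DMSym M N) :=
  (List.range (k + 1 - j).toNat).map fun n => x (j + n)

/-- The `(M,N)` Dyck–Motzkin shift `Σ_D`. -/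
def SigmaD (M N : ℕ) : Set (ℤ → DMSym M N) :=
  {x | ∀ j k : ℤ, j < k → red (wordAt x j k) ≠ none}

/-- The left shift `σ`. -/
def shift {A : Type*} : (ℤ → A) → (ℤ → A) := fun x i => x (i + 1)

/-- The inverse `σ⁻¹` of the left shift. -/
def shiftInv {A : Type*} : (ℤ → A) → (ℤ → A) := fun x i => x (i - 1)

lemma wordAt_shift {M N : ℕ} (x : ℤ → DMSym M N) (j k : ℤ) :
    wordAt (shift x) j k = wordAt x (j + 1) (k + 1) := by
  simp only [wordAt, shift]
  rw [show (k + 1 + 1 - (j + 1) : ℤ) = k + 1 - j by ring]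
  exact List.map_congr_left fun n _ => by rw [show (j + n + 1 : ℤ) = j + 1 + n by ring]

lemma shift_mem_SigmaD {M N : ℕ} {x : ℤ → DMSym M N} (hx : x ∈ SigmaD M N) :
    shift x ∈ SigmaD M N := by
  intro j k hjk
  rw [wordAt_shift]
  exact hx (j + 1) (k + 1) (by omega)

/-- The left shift acting on `Σ_D`. -/
def shiftD (M N : ℕ) : ↥(SigmaD M N) → ↥(SigmaD M N) :=
  fun x => ⟨shift x.val, shift_mem_SigmaD x.property⟩

section Generic
variable {X : Type*} [MeasurableSpace X]

/-- The set of `T`-invariant Borel probability measures. -/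
def InvMeas (T : X → X) : Set (ProbabilityMeasure X) :=
  {μ | MeasurePreserving T μ.toMeasure μ.toMeasure}

/-- The set of `T`-invariant ergodic Borel probability measures. -/
def ErgMeas (T : X → X) : Set (ProbabilityMeasure X) :=
  {μ | Ergodic T μ.toMeasure}

/-- A `CO`-measure: an invariant ergodic probability measure supported on the orbit of a
single periodic point. -/
def IsCOMeas (T : X → X) (μ : ProbabilityMeasure X) : Prop :=
  Ergodic T μ.toMeasure ∧
    ∃ (x : X) (n : ℕ), 0 < n ∧ T^[n] x = x ∧
      μ.toMeasure {y | ∃ k : ℕ, y = T^[k] x} = 1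

/-- Convexity for a set of probability measures: it is stable under taking the convex
combination `t•μ + (1-t)•ν` of any two of its members. -/
def ConvexMeasSet (U : Set (ProbabilityMeasure X)) : Prop :=
  ∀ μ ∈ U, ∀ ν ∈ U, ∀ t : ℝ≥0∞, t ≤ 1 → ∀ ρ : ProbabilityMeasure X,
    ρ.toMeasure = t • μ.toMeasure + (1 - t) • ν.toMeasure → ρ ∈ U

/-- A measure is fully supported if it gives positive measure to every non-empty open set. -/
def FullSupp [TopologicalSpace X] (μ : ProbabilityMeasure X) : Prop :=
  ∀ U : Set X, IsOpen U → U.Nonempty → 0 < μ.toMeasure U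

/-- Measure-theoretic isomorphism of the measure-preserving systems `(X,T,μ)` and `(Y,S,ν)`. -/
def MeasureIso {Y : Type*} [MeasurableSpace Y] (T : X → X) (S : Y → Y)
    (μ : Measure X) (ν : Measure Y) : Prop :=
  ∃ (φ : X → Y) (ψ : Y → X), Measurable φ ∧ Measurable ψ ∧
    Measure.map φ μ = ν ∧ Measure.map ψ ν = μ ∧
    (∀ᵐ x ∂μ, ψ (φ x) = x) ∧ (∀ᵐ y ∂ν, φ (ψ y) = y) ∧
    (∀ᵐ x ∂μ, φ (T x) = S (φ x))

/-- The system `(X,T,μ)` is Bernoulli: it is measure-theoretically isomorphic to a two-sided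
Bernoulli shift, i.e. the left shift on `ℤ → ℕ` equipped with an i.i.d. product measure
(determined by requiring that the measures of all cylinder sets factorize according to a
fixed distribution `p`). -/
def IsBernoulli (T : X → X) (μ : Measure X) : Prop :=
  ∃ (p : ℕ → ℝ≥0∞) (ν : Measure (ℤ → ℕ)), (∑' n, p n) = 1 ∧
    IsProbabilityMeasure ν ∧
    (∀ (n : ℕ) (w : Fin n → ℕ) (j : ℤ),
      ν {y | ∀ i : Fin n, y (j + (i : ℕ)) = w i} = ∏ i, p (w i)) ∧
    MeasureIso T shift μ ν

end Generic

/-- `G_j(x)`: `1` on left brackets, `-1` on right brackets, `0` on units. -/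
def Gfun {M N : ℕ} (x : ℤ → DMSym M N) (j : ℤ) : ℤ :=
  match x j with
  | .la _ => 1
  | .u _ => 0
  | .ra _ => -1

/-- `H_i(x) = Σ_{j=0}^{i-1} G_j(x)` for `i ≥ 1`, `H_i(x) = -Σ_{j=i}^{-1} G_j(x)` for
`i ≤ -1`, and `H_0(x) = 0`. -/
def Hfun {M N : ℕ} (x : ℤ → DMSym M N) (i : ℤ) : ℤ :=
  if 0 ≤ i then ∑ j ∈ Finset.range i.toNat, Gfun x (j : ℤ)
  else -∑ j ∈ Finset.range (-i).toNat, Gfun x (i + (j : ℤ))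

/-- The set `A_0`. -/
def A0set (M N : ℕ) : Set (ℤ → DMSym M N) :=
  SigmaD M N ∩ {x | ∀ i : ℤ,
    (∃ j : ℕ, 1 ≤ j ∧ Hfun x (i + (j : ℤ)) = Hfun x i) ∧
    (∃ j : ℕ, 1 ≤ j ∧ Hfun x (i - (j : ℤ)) = Hfun x i)}

/-- The set `A_α`. -/
def AalphaSet (M N : ℕ) : Set (ℤ → DMSym M N) :=
  SigmaD M N ∩ {x | Tendsto (Hfun x) atTop atTop ∧ Tendsto (Hfun x) atBot atBot}

/-- The set `A_β`. -/
def AbetaSet (M N : ℕ) : Set (ℤ → DMSym M N) :=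
  SigmaD M N ∩ {x | Tendsto (Hfun x) atTop atBot ∧ Tendsto (Hfun x) atBot atTop}

/-- The set `B_α` of sequences in `Σ_D` in which every right bracket is closed. -/
def BalphaSet (M N : ℕ) : Set (ℤ → DMSym M N) :=
  SigmaD M N ∩ {x | ∀ i : ℤ, (∃ k, x i = DMSym.ra k) →
    ∃ j : ℕ, 1 ≤ j ∧ Hfun x (i - (j : ℤ) + 1) = Hfun x (i + 1)}

/-- The set `B_β` of sequences in `Σ_D` in which every left bracket is closed. -/
def BbetaSet (M N : ℕ) : Set (ℤ → DMSym M N) :=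
  SigmaD M N ∩ {x | ∀ i : ℤ, (∃ k, x i = DMSym.la k) →
    ∃ j : ℕ, 1 ≤ j ∧ Hfun x (i + (j : ℤ)) = Hfun x i}

/-- The alphabet `D_α ∪ D_0 ∪ {β}` of the full shift `Σ_α`. -/
inductive AlSym (M N : ℕ) : Type where
  | la : Fin M → AlSym M N
  | u  : Fin N → AlSym M N
  | b  : AlSym M N
deriving DecidableEq

namespace AlSym

def equivSum (M N : ℕ) : AlSym M N ≃ (Fin M ⊕ Fin N ⊕ Unit) where
  toFun s := match s with
    | .la k => Sum.inl k
    | .u k => Sum.inr (Sum.inl k)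
    | .b => Sum.inr (Sum.inr ())
  invFun s := match s with
    | Sum.inl k => .la k
    | Sum.inr (Sum.inl k) => .u k
    | Sum.inr (Sum.inr _) => .b
  left_inv s := by cases s <;> rfl
  right_inv s := by rcases s with k | k | k <;> rfl

instance (M N : ℕ) : Fintype (AlSym M N) := Fintype.ofEquiv _ (equivSum M N).symm
instance (M N : ℕ) : TopologicalSpace (AlSym M N) := ⊥
instance (M N : ℕ) : DiscreteTopology (AlSym M N) := ⟨rfl⟩
instance (M N : ℕ) : MeasurableSpace (AlSym M N) := ⊤
instance (M N : ℕ) : BorelSpace (AlSym M N) := ⟨borel_eq_top_of_discrete.symm⟩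

end AlSym

/-- The factor map `φ_α : Σ_D → Σ_α` replacing every right bracket by the single symbol `β`. -/
def phiAl {M N : ℕ} (x : ℤ → DMSym M N) : ℤ → AlSym M N := fun i =>
  match x i with
  | .la k => .la k
  | .u k => .u k
  | .ra _ => .b

/-- `K_α = φ_α(B_α)`. -/
def Kalpha (M N : ℕ) : Set (ℤ → AlSym M N) := phiAl '' BalphaSet M N

/-- `G_{α,j}`. -/
def GAl {M N : ℕ} (y : ℤ → AlSym M N) (j : ℤ) : ℤ :=
  match y j with
  | .la _ => 1
  | .u _ => 0
  | .b => -1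

/-- `H_{α,i}`. -/
def HAl {M N : ℕ} (y : ℤ → AlSym M N) (i : ℤ) : ℤ :=
  if 0 ≤ i then ∑ j ∈ Finset.range i.toNat, GAl y (j : ℤ)
  else -∑ j ∈ Finset.range (-i).toNat, GAl y (i + (j : ℤ))

/-- `s_α(i,y) = max { j < i+1 : H_{α,j}(y) = H_{α,i+1}(y) }`. -/
noncomputable def sAl {M N : ℕ} (y : ℤ → AlSym M N) (i : ℤ) : ℤ :=
  sSup {j : ℤ | j < i + 1 ∧ HAl y j = HAl y (i + 1)}

/-- `ψ_α : K_α → Σ_D`, replacing each `β` by the right bracket matching the left bracket at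
position `s_α(i,y)` (defined as a total function using a junk value outside `K_α`). -/
noncomputable def psiAl (M N : ℕ) (hM : 0 < M) (y : ℤ → AlSym M N) : ℤ → DMSym M N := fun i =>
  match y i with
  | .la k => .la k
  | .u k => .u k
  | .b =>
    match y (sAl y i) with
    | .la k => .ra k
    | _ => .ra ⟨0, hM⟩

/-- The function `E_α = 2·𝟙_{Σ_α(α)} + 𝟙_{Σ_α(0)}`. -/
def EAl {M N : ℕ} (y : ℤ → AlSym M N) : ℝ :=
  match y 0 with
  | .la _ => 2
  | .u _ => 1
  | .b => 0

namespace DMAux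

/-! ### Generic height-function lemmas -/

lemma H_step (G H : ℤ → ℤ)
    (hH : ∀ i : ℤ, H i = if 0 ≤ i then ∑ j ∈ Finset.range i.toNat, G (j : ℤ)
      else -∑ j ∈ Finset.range (-i).toNat, G (i + (j : ℤ))) (m : ℤ) :
    H (m + 1) = H m + G m := by
  rcases le_or_gt 0 m with hm | hm
  · rw [hH, hH, if_pos (by omega), if_pos hm,
      show (m + 1).toNat = m.toNat + 1 by omega, Finset.sum_range_succ,
      Int.toNat_of_nonneg hm]
  · rcases eq_or_lt_of_le (show m ≤ -1 by omega) with hm1 | hm1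
    · subst hm1
      rw [show (-1 : ℤ) + 1 = 0 by ring, hH, hH, if_pos le_rfl, if_neg (by omega)]
      norm_num
    · rw [hH, hH, if_neg (by omega), if_neg (by omega)]
      have h1 : (-m).toNat = (-(m + 1)).toNat + 1 := by omega
      rw [h1, Finset.sum_range_succ']
      have h2 : ∀ j ∈ Finset.range (-(m + 1)).toNat,
          G (m + ((j : ℕ) + 1 : ℕ)) = G (m + 1 + (j : ℤ)) := by
        intro j _; congr 1; push_cast; ring
      rw [Finset.sum_congr rfl h2]
      push_cast
      ring_nf

lemma H_diff (G H : ℤ → ℤ) (hstep : ∀ m : ℤ, H (m + 1) = H m + G m)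
    (a : ℤ) : ∀ b : ℤ, a ≤ b →
    H b = H a + ∑ j ∈ Finset.range (b - a).toNat, G (a + (j : ℤ)) := by
  refine Int.le_induction ?_ ?_
  · simp
  · intro m hm ih
    rw [hstep m, ih, show (m + 1 - a).toNat = (m - a).toNat + 1 by omega,
      Finset.sum_range_succ, show a + ((m - a).toNat : ℤ) = m by omega]
    ring

lemma H_sub_ge (G H : ℤ → ℤ) (hstep : ∀ m : ℤ, H (m + 1) = H m + G m)
    (hG : ∀ j : ℤ, -1 ≤ G j) (a b : ℤ) (hab : a ≤ b) :
    -(b - a) ≤ H b - H a := by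
  rw [H_diff G H hstep a b hab]
  have h1 : ∑ j ∈ Finset.range (b - a).toNat, (-1 : ℤ) ≤
      ∑ j ∈ Finset.range (b - a).toNat, G (a + (j : ℤ)) :=
    Finset.sum_le_sum fun j _ => hG _
  simp only [Finset.sum_const, Finset.card_range, nsmul_eq_mul, mul_neg_one] at h1
  omega

/-- Discrete intermediate value theorem (from below, with up-steps at most 1). -/
lemma ivt (g : ℤ → ℤ) (a c : ℤ) : ∀ b : ℤ, a ≤ b →
    (∀ j, a ≤ j → j < b → g (j + 1) ≤ g j + 1) →
    g a ≤ c → c ≤ g b → ∃ j, a ≤ j ∧ j ≤ b ∧ g j = c := by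
  refine Int.le_induction ?_ ?_
  · exact fun _ h1 h2 => ⟨a, le_refl a, le_refl a, le_antisymm h1 h2⟩
  · intro b hb ih hstep h1 h2
    rcases le_or_gt c (g b) with h3 | h3
    · obtain ⟨j, hj1, hj2, hj3⟩ := ih (fun j hj1 hj2 => hstep j hj1 (by omega)) h1 h3
      exact ⟨j, hj1, by omega, hj3⟩
    · have h4 := hstep b hb (by omega)
      exact ⟨b + 1, by omega, le_refl _, by omega⟩

/-! ### Height of finite words -/

/-- The `G`-value of a single symbol. -/
def gsym {M N : ℕ} : DMSym M N → ℤ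
  | .la _ => 1
  | .u _ => 0
  | .ra _ => -1

/-- The total height of a finite word. -/
def htL {M N : ℕ} (w : List (DMSym M N)) : ℤ := (w.map gsym).sum

lemma gsym_eq {M N : ℕ} (x : ℤ → DMSym M N) (t : ℤ) : gsym (x t) = Gfun x t := by
  cases h : x t <;> simp [gsym, Gfun, h]

lemma Gfun_ge {M N : ℕ} (x : ℤ → DMSym M N) (t : ℤ) : -1 ≤ Gfun x t := by
  cases h : x t <;> simp [Gfun, h]

lemma Gfun_le {M N : ℕ} (x : ℤ → DMSym M N) (t : ℤ) : Gfun x t ≤ 1 := by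
  cases h : x t <;> simp [Gfun, h]

lemma Hfun_step {M N : ℕ} (x : ℤ → DMSym M N) (m : ℤ) :
    Hfun x (m + 1) = Hfun x m + Gfun x m :=
  H_step (Gfun x) (Hfun x) (fun _ => rfl) m

lemma HAl_step {M N : ℕ} (y : ℤ → AlSym M N) (m : ℤ) :
    HAl y (m + 1) = HAl y m + GAl y m :=
  H_step (GAl y) (HAl y) (fun _ => rfl) m

lemma sum_map_range (f : ℕ → ℤ) : ∀ m : ℕ,
    ((List.range m).map f).sum = ∑ j ∈ Finset.range m, f j
  | 0 => by simp
  | m + 1 => by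
      rw [List.range_succ, List.map_append, List.sum_append, Finset.sum_range_succ,
        sum_map_range f m]
      simp

lemma flatMap_sing {α β : Type*} (f : α → β) (l : List α) :
    (l.flatMap fun a => [f a]) = l.map f := by
  induction l with
  | nil => rfl
  | cons a l ih => simp [List.flatMap_cons, ih]

lemma wordAt_eq {M N : ℕ} (x : ℤ → DMSym M N) (a b : ℤ) :
    wordAt x a b = (List.range (b + 1 - a).toNat).map (fun n : ℕ => x (a + (n : ℤ))) := by
  show List.map (fun n : ℤ => x (a + n))
      ((List.range (b + 1 - a).toNat).flatMap fun n : ℕ => [((n : ℕ) : ℤ)]) = _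
  rw [flatMap_sing, List.map_map]
  rfl

lemma wordAt_length {M N : ℕ} (x : ℤ → DMSym M N) (a b : ℤ) :
    (wordAt x a b).length = (b + 1 - a).toNat := by
  rw [wordAt_eq]
  simp

lemma htL_prefix {M N : ℕ} (x : ℤ → DMSym M N) (a b : ℤ) (hab : a ≤ b + 1)
    (p : List (DMSym M N)) (hp : p <+: wordAt x a b) :
    htL p = Hfun x (a + (p.length : ℤ)) - Hfun x a := by
  have hlen : p.length ≤ (b + 1 - a).toNat := by
    have := hp.length_le
    rwa [wordAt_length] at this
  have hpeq : p = (List.range p.length).map fun n : ℕ => x (a + (n : ℤ)) := by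
    conv_lhs => rw [List.prefix_iff_eq_take.mp hp]
    rw [wordAt_eq, ← List.map_take, List.take_range, min_eq_left hlen]
  have h2 : htL p = ∑ j ∈ Finset.range p.length, Gfun x (a + (j : ℤ)) := by
    conv_lhs => rw [hpeq]
    rw [htL, List.map_map]
    rw [show (gsym ∘ fun n : ℕ => x (a + (n : ℤ))) = fun n : ℕ => Gfun x (a + (n : ℤ)) from
      funext fun n => gsym_eq x _]
    exact sum_map_range _ _
  rw [h2]
  rw [H_diff (Gfun x) (Hfun x) (Hfun_step x) a (a + (p.length : ℤ)) (by omega)]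
  rw [show (a + (p.length : ℤ) - a).toNat = p.length by omega]
  ring

lemma htL_wordAt {M N : ℕ} (x : ℤ → DMSym M N) (a b : ℤ) (hab : a ≤ b + 1) :
    htL (wordAt x a b) = Hfun x (b + 1) - Hfun x a := by
  have := htL_prefix x a b hab (wordAt x a b) (List.prefix_refl _)
  rwa [wordAt_length, show a + (((b + 1 - a).toNat : ℕ) : ℤ) = b + 1 by omega] at this

lemma wordAt_cons {M N : ℕ} (x : ℤ → DMSym M N) (a b : ℤ) (hab : a ≤ b) :
    wordAt x a b = x a :: wordAt x (a + 1) b := by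
  rw [wordAt_eq, wordAt_eq, show (b + 1 - a).toNat = (b + 1 - (a + 1)).toNat + 1 by omega,
    List.range_succ_eq_map, List.map_cons, List.map_map]
  congr 1
  · simp
  · refine List.map_congr_left fun n _ => ?_
    simp only [Function.comp_apply]
    congr 1
    push_cast
    ring

lemma wordAt_snoc {M N : ℕ} (x : ℤ → DMSym M N) (a b : ℤ) (hab : a ≤ b) :
    wordAt x a b = wordAt x a (b - 1) ++ [x b] := by
  rw [wordAt_eq, wordAt_eq, show (b + 1 - a).toNat = (b - 1 + 1 - a).toNat + 1 by omega,
    List.range_succ, List.map_append]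
  congr 1
  simp only [List.map_cons, List.map_nil]
  congr 2
  omega

/-! ### The bracket-matching lemma for the reduction -/

lemma htL_append {M N : ℕ} (u v : List (DMSym M N)) : htL (u ++ v) = htL u + htL v := by
  simp [htL]

lemma fold_stack {M N : ℕ} (k : Fin M) (u : List (DMSym M N)) :
    (∀ p, p <+: u → 0 ≤ htL p) → u.foldl dyckStep (some ([], [k])) ≠ none →
    ∃ as₂ : List (Fin M), u.foldl dyckStep (some ([], [k])) = some ([], k :: as₂) ∧
      (as₂.length : ℤ) = htL u := by
  induction u using List.reverseRecOn with
  | nil => exact fun _ _ => ⟨[], rfl, by simp [htL]⟩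
  | append_singleton u s ih =>
    intro hpos hne
    rw [List.foldl_append] at hne ⊢
    have hu : u.foldl dyckStep (some ([], [k])) ≠ none := by
      intro h; rw [h] at hne; exact hne rfl
    obtain ⟨as₂, heq, hlen⟩ := ih (fun p hp => hpos p (hp.trans (u.prefix_append [s]))) hu
    rw [heq] at hne ⊢
    have hht : htL (u ++ [s]) = htL u + gsym s := by simp [htL]
    cases s with
    | la j =>
      refine ⟨as₂ ++ [j], rfl, ?_⟩
      rw [hht]
      simp only [gsym, List.length_append, List.length_singleton]
      push_cast
      omega
    | u j =>
      refine ⟨as₂, rfl, ?_⟩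
      rw [hht]
      simp only [gsym]
      omega
    | ra j =>
      have h1 : 0 ≤ htL (u ++ [DMSym.ra j]) := hpos _ (List.prefix_refl _)
      have h2 : 1 ≤ htL u := by
        rw [hht] at h1; simp only [gsym] at h1; omega
      cases as₂ with
      | nil => simp at hlen; omega
      | cons bh bt =>
        have hlast : (k :: bh :: bt).getLast? = some ((bh :: bt).getLast (List.cons_ne_nil _ _)) := by
          rw [List.getLast?_eq_getLast_of_ne_nil (List.cons_ne_nil _ _),
            List.getLast_cons (List.cons_ne_nil _ _)]
        have hstep : dyckStep (some ([], k :: bh :: bt)) (DMSym.ra j : DMSym M N)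
            = if (bh :: bt).getLast (List.cons_ne_nil _ _) = j
              then some ([], (k :: bh :: bt).dropLast) else none := by
          simp only [dyckStep, hlast]
        simp only [List.foldl_cons, List.foldl_nil] at hne ⊢
        rw [hstep] at hne ⊢
        by_cases hj : (bh :: bt).getLast (List.cons_ne_nil _ _) = j
        · rw [if_pos hj]
          rw [List.dropLast_cons₂]
          refine ⟨(bh :: bt).dropLast, rfl, ?_⟩
          rw [hht]
          simp only [gsym, List.length_dropLast, List.length_cons] at *
          push_cast
          omega
        · rw [if_neg hj] at hne
          exact absurd rfl hne

lemma matched_eq {M N : ℕ} (k k' : Fin M) (u : List (DMSym M N))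
    (hpos : ∀ p, p <+: u → 0 ≤ htL p) (h0 : htL u = 0)
    (hred : red (DMSym.la k :: (u ++ [DMSym.ra k']) : List (DMSym M N)) ≠ none) :
    k = k' := by
  unfold red at hred
  rw [List.foldl_cons, List.foldl_append] at hred
  have h1 : dyckStep (some ([], []) : DyckElem M) (DMSym.la k : DMSym M N) = some ([], [k]) := rfl
  rw [h1] at hred
  have hu : u.foldl dyckStep (some ([], [k])) ≠ none := by
    intro h
    rw [h] at hred
    exact hred rfl
  obtain ⟨as₂, heq, hlen⟩ := fold_stack k u hpos hu
  have h2 : as₂ = [] := List.eq_nil_of_length_eq_zero (by omega)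
  subst h2
  rw [heq] at hred
  by_contra hkk
  apply hred
  simp [dyckStep, hkk]

/-! ### Measurability of `ψ_α` -/

lemma GAl_eq {M N : ℕ} (y : ℤ → AlSym M N) (b : ℤ) :
    GAl y b = (match y b with | .la _ => (1 : ℤ) | .u _ => 0 | .b => -1) := rfl

lemma measurable_GAl {M N : ℕ} (j : ℤ) : Measurable fun y : ℤ → AlSym M N => GAl y j := by
  have : (fun y : ℤ → AlSym M N => GAl y j) =
      (fun a : AlSym M N => match a with | .la _ => (1 : ℤ) | .u _ => 0 | .b => -1) ∘
        fun y : ℤ → AlSym M N => y j := rfl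
  rw [this]
  exact (measurable_of_countable _).comp (measurable_pi_apply j)

lemma measurable_HAl {M N : ℕ} (m : ℤ) : Measurable fun y : ℤ → AlSym M N => HAl y m := by
  unfold HAl
  split_ifs with h
  · exact Finset.measurable_sum _ fun j _ => measurable_GAl _
  · exact (Finset.measurable_sum _ fun j _ => measurable_GAl _).neg

lemma measurable_sAl {M N : ℕ} (i : ℤ) : Measurable fun y : ℤ → AlSym M N => sAl y i := by
  apply measurable_to_countable'
  intro q
  show MeasurableSet {y : ℤ → AlSym M N | sAl y i = q}
  have hA : ∀ j : ℤ, MeasurableSet {y : ℤ → AlSym M N | j < i + 1 ∧ HAl y j = HAl y (i + 1)} := by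
    intro j
    by_cases hj : j < i + 1
    · have : {y : ℤ → AlSym M N | j < i + 1 ∧ HAl y j = HAl y (i + 1)} =
          ⋃ c : ℤ, ({y | HAl y j = c} ∩ {y | HAl y (i + 1) = c}) := by
        ext y
        simp only [Set.mem_setOf_eq, Set.mem_iUnion, Set.mem_inter_iff, hj, true_and]
        exact ⟨fun h => ⟨HAl y (i + 1), h, rfl⟩, fun ⟨c, h1, h2⟩ => h1.trans h2.symm⟩
      rw [this]
      exact MeasurableSet.iUnion fun c =>
        ((measurable_HAl j) (measurableSet_singleton c)).inter
          ((measurable_HAl (i + 1)) (measurableSet_singleton c))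
    · convert MeasurableSet.empty
      ext y
      simp [hj]
  have key : {y : ℤ → AlSym M N | sAl y i = q} =
      (({y | q < i + 1 ∧ HAl y q = HAl y (i + 1)} ∩
        ⋂ j : ℤ, {y : ℤ → AlSym M N | (j < i + 1 ∧ HAl y j = HAl y (i + 1)) → j ≤ q}) ∪
      ((⋂ j : ℤ, {y : ℤ → AlSym M N | j < i + 1 ∧ HAl y j = HAl y (i + 1)}ᶜ) ∩
        {y : ℤ → AlSym M N | q = 0})) := by
    ext y
    set S : Set ℤ := {j : ℤ | j < i + 1 ∧ HAl y j = HAl y (i + 1)} with hSdef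
    have hbdd : BddAbove S := ⟨i, fun j hj => by
      have := hj.1; omega⟩
    have hform : sAl y i = sSup S := rfl
    simp only [Set.mem_union, Set.mem_inter_iff, Set.mem_iInter, Set.mem_setOf_eq,
      Set.mem_compl_iff]
    constructor
    · intro h
      rcases S.eq_empty_or_nonempty with hS | hS
      · refine Or.inr ⟨fun j hj => ?_, ?_⟩
        · rw [hSdef] at hS
          exact absurd (hS ▸ hj : (j : ℤ) ∈ (∅ : Set ℤ)) (Set.notMem_empty j)
        · rw [hform, hS, Int.csSup_empty] at h
          exact h.symm
      · left
        have hmem : sSup S ∈ S := Int.csSup_mem hS hbdd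
        rw [hform] at h
        rw [h] at hmem
        exact ⟨hmem, fun j hj => h ▸ le_csSup hbdd hj⟩
    · rintro (⟨hq, hub⟩ | ⟨hempty, hq0⟩)
      · rw [hform]
        exact le_antisymm (csSup_le ⟨q, hq⟩ hub) (le_csSup hbdd hq)
      · have hS : S = ∅ := Set.eq_empty_iff_forall_notMem.mpr hempty
        rw [hform, hS, Int.csSup_empty]
        exact hq0.symm
  rw [key]
  refine MeasurableSet.union (MeasurableSet.inter (hA q) ?_) (MeasurableSet.inter ?_ ?_)
  · refine MeasurableSet.iInter fun j => ?_
    by_cases hj : j ≤ q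
    · convert MeasurableSet.univ
      ext y; simp [hj]
    · have : {y : ℤ → AlSym M N | (j < i + 1 ∧ HAl y j = HAl y (i + 1)) → j ≤ q} =
          {y : ℤ → AlSym M N | j < i + 1 ∧ HAl y j = HAl y (i + 1)}ᶜ := by
        ext y; simp [hj]
      rw [this]
      exact (hA j).compl
  · exact MeasurableSet.iInter fun j => (hA j).compl
  · by_cases hq : q = (0 : ℤ)
    · convert MeasurableSet.univ
      ext y; simp [hq]
    · convert MeasurableSet.empty
      ext y; simp [hq]

lemma measurable_psiAl {M N : ℕ} (hM : 0 < M) : Measurable (psiAl M N hM) := by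
  apply measurable_pi_lambda
  intro i
  have h2 : Measurable fun y : ℤ → AlSym M N => y (sAl y i) := by
    apply measurable_to_countable'
    intro c
    show MeasurableSet {y : ℤ → AlSym M N | y (sAl y i) = c}
    have : {y : ℤ → AlSym M N | y (sAl y i) = c} =
        ⋃ q : ℤ, ({y : ℤ → AlSym M N | sAl y i = q} ∩ {y | y q = c}) := by
      ext y
      simp only [Set.mem_setOf_eq, Set.mem_iUnion, Set.mem_inter_iff]
      exact ⟨fun h => ⟨sAl y i, rfl, h⟩, fun ⟨q, h1, h2⟩ => h1 ▸ h2⟩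
    rw [this]
    refine MeasurableSet.iUnion fun q => MeasurableSet.inter ?_ ?_
    · exact (measurable_sAl i) (measurableSet_singleton q)
    · have hrw : {y : ℤ → AlSym M N | y q = c} = (fun y : ℤ → AlSym M N => y q) ⁻¹' {c} := rfl
      rw [hrw]
      exact (measurable_pi_apply q) (measurableSet_singleton c)
  have key : (fun y : ℤ → AlSym M N => psiAl M N hM y i) =
      (fun p : AlSym M N × AlSym M N =>
        match p.1 with
        | .la k => DMSym.la k
        | .u k => DMSym.u k
        | .b => match p.2 with
          | .la k => DMSym.ra k
          | _ => DMSym.ra ⟨0, hM⟩) ∘ fun y => (y i, y (sAl y i)) := by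
    funext y
    cases hy : y i <;> simp only [psiAl, hy, Function.comp_apply]
  rw [key]
  exact (measurable_of_countable _).comp ((measurable_pi_apply i).prodMk h2)

end DMAux

/-- Lemma 3.5: if `ν` is a shift-invariant probability measure on the full shift `Σ_α` with
`ν(K_α) = 1` that is fully supported on `Σ_α`, then the push-forward `ψ_α^*(ν) = ν ∘ ψ_α⁻¹`
is fully supported on `Σ_D`. -/
theorem pushforward_fully_supported (M N : ℕ) (hM : 2 ≤ M)
    (ν : ProbabilityMeasure (ℤ → AlSym M N))
    (hinv : MeasurePreserving shift ν.toMeasure ν.toMeasure)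
    (hK : ν.toMeasure (Kalpha M N) = 1)
    (hfull : FullSupp ν) :
    ∀ U : Set (ℤ → DMSym M N), IsOpen U → (U ∩ SigmaD M N).Nonempty →
      0 < Measure.map (psiAl M N (by omega)) ν.toMeasure U := by
  intro U hU hUne
  suffices hgen : ∀ hp : 0 < M, 0 < Measure.map (psiAl M N hp) ν.toMeasure U by
    exact hgen (by omega)
  intro hM'
  obtain ⟨x, hxU, hxS⟩ := hUne
  classical
  -- Step 1: a cylinder around `x` contained in `U`
  obtain ⟨I, uu, huu, hIU⟩ := isOpen_pi_iff.mp hU x hxU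
  set n : ℕ := I.sup fun j => j.natAbs with hn
  have hIcc : ∀ j ∈ I, -(n : ℤ) ≤ j ∧ j ≤ (n : ℤ) := by
    intro j hj
    have h1 : j.natAbs ≤ n := Finset.le_sup (f := fun j : ℤ => j.natAbs) hj
    omega
  have hcylU : ∀ z : ℤ → DMSym M N,
      (∀ j : ℤ, -(n : ℤ) ≤ j → j ≤ (n : ℤ) → z j = x j) → z ∈ U := by
    intro z hz
    refine hIU ?_
    rw [Set.mem_pi]
    intro j hj
    have hj' : j ∈ I := hj
    have h2 := hIcc j hj'
    rw [hz j h2.1 h2.2]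
    exact (huu j hj').2
  -- Step 2: the auxiliary height function `f`
  set st : ℤ := -(n : ℤ) - (2 * (n : ℤ) + 2) with hst
  set f : ℤ → ℤ := fun j =>
    if j < -(n : ℤ) then j - st
    else Hfun x j - Hfun x (-(n : ℤ)) + (2 * (n : ℤ) + 2) with hfdef
  have hfst : f st = 0 := by
    simp only [hfdef]
    rw [if_pos (show st < -(n : ℤ) by omega)]
    omega
  have hstep : ∀ j : ℤ, st ≤ j → j ≤ (n : ℤ) →
      f (j + 1) = f j + (if j < -(n : ℤ) then 1 else Gfun x j) := by
    intro j h1 h2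
    by_cases hj : j < -(n : ℤ)
    · rw [if_pos hj]
      by_cases hj1 : j + 1 < -(n : ℤ)
      · simp only [hfdef]
        rw [if_pos hj1, if_pos hj]
        ring
      · have hj2 : j + 1 = -(n : ℤ) := by omega
        simp only [hfdef]
        rw [if_neg (by omega), if_pos hj, hj2]
        omega
    · rw [if_neg hj]
      simp only [hfdef]
      rw [if_neg (by omega), if_neg hj, DMAux.Hfun_step x j]
      ring
  have hstep_le : ∀ j : ℤ, st ≤ j → j ≤ (n : ℤ) → f (j + 1) ≤ f j + 1 := by
    intro j h1 h2
    rw [hstep j h1 h2]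
    have := DMAux.Gfun_le x j
    split_ifs <;> omega
  have hpos : ∀ j : ℤ, st < j → j ≤ (n : ℤ) + 1 → 1 ≤ f j := by
    intro j h1 h2
    by_cases hj : j < -(n : ℤ)
    · simp only [hfdef]
      rw [if_pos hj]
      omega
    · have h3 := DMAux.H_sub_ge (Gfun x) (Hfun x) (DMAux.Hfun_step x) (DMAux.Gfun_ge x)
        (-(n : ℤ)) j (by omega)
      simp only [hfdef]
      rw [if_neg hj]
      omega
  -- Step 3: matching positions
  set T : ℤ → Finset ℤ := fun i => (Finset.Icc st i).filter fun j => f j = f (i + 1) with hTdef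
  set p : ℤ → ℤ := fun i => if h : (T i).Nonempty then (T i).max' h else st with hpdef
  have hmatch : ∀ i : ℤ, -(n : ℤ) ≤ i → i ≤ (n : ℤ) → Gfun x i = -1 →
      (st ≤ p i ∧ p i < i ∧ f (p i) = f (i + 1)) ∧
      (∀ j : ℤ, p i < j → j ≤ i → f (i + 1) < f j) := by
    intro i hi1 hi2 hGi
    have hc1 : 1 ≤ f (i + 1) := hpos (i + 1) (by omega) (by omega)
    have hfi : f i = f (i + 1) + 1 := by
      have h4 := hstep i (by omega) hi2
      rw [if_neg (by omega)] at h4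
      omega
    have hTne : (T i).Nonempty := by
      obtain ⟨j, hj1, hj2, hj3⟩ := DMAux.ivt f st (f (i + 1)) i (by omega)
        (fun j hj1 hj2 => hstep_le j hj1 (by omega)) (by omega) (by omega)
      refine ⟨j, ?_⟩
      simp only [hTdef, Finset.mem_filter, Finset.mem_Icc]
      exact ⟨⟨hj1, hj2⟩, hj3⟩
    have hpeq : p i = (T i).max' hTne := by
      simp only [hpdef]
      rw [dif_pos hTne]
    have hpmem := Finset.max'_mem (T i) hTne
    rw [← hpeq] at hpmem
    simp only [hTdef, Finset.mem_filter, Finset.mem_Icc] at hpmem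
    obtain ⟨⟨hp1, hp2⟩, hp3⟩ := hpmem
    have hub : ∀ j ∈ T i, j ≤ p i := by
      intro j hj
      rw [hpeq]
      exact Finset.le_max' (T i) j hj
    have hstrict : ∀ j : ℤ, p i < j → j ≤ i → f (i + 1) < f j := by
      intro j hj1 hj2
      by_contra hcon
      push_neg at hcon
      rcases eq_or_lt_of_le hcon with heq2 | hlt2
      · have hjT : j ∈ T i := by
          simp only [hTdef, Finset.mem_filter, Finset.mem_Icc]
          exact ⟨⟨by omega, hj2⟩, heq2⟩
        have := hub j hjT
        omega
      · obtain ⟨j', hj'1, hj'2, hj'3⟩ := DMAux.ivt f j (f (i + 1)) i (by omega)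
          (fun t ht1 ht2 => hstep_le t (by omega) (by omega)) (by omega) (by omega)
        have hj'T : j' ∈ T i := by
          simp only [hTdef, Finset.mem_filter, Finset.mem_Icc]
          exact ⟨⟨by omega, hj'2⟩, hj'3⟩
        have := hub j' hj'T
        omega
    have hpi : p i < i := by
      rcases eq_or_lt_of_le hp2 with he | hl
      · exfalso
        rw [he] at hp3
        omega
      · exact hl
    exact ⟨⟨hp1, hpi, hp3⟩, hstrict⟩
  have hpstep : ∀ i : ℤ, -(n : ℤ) ≤ i → i ≤ (n : ℤ) → Gfun x i = -1 →
      f (p i + 1) = f (i + 1) + 1 := by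
    intro i hi1 hi2 hGi
    obtain ⟨⟨hp1, hp2, hp3⟩, hstrict⟩ := hmatch i hi1 hi2 hGi
    have h1 := hstrict (p i + 1) (by omega) (by omega)
    have h2 := hstep_le (p i) hp1 (by omega)
    omega
  have hinjkey : ∀ i i' : ℤ, -(n : ℤ) ≤ i → i ≤ (n : ℤ) → Gfun x i = -1 →
      -(n : ℤ) ≤ i' → i' ≤ (n : ℤ) → Gfun x i' = -1 → i < i' → p i = p i' → False := by
    intro i i' hi1 hi2 hGi hi'1 hi'2 hGi' hlt hpe
    obtain ⟨⟨hp1, hp2, hp3⟩, _⟩ := hmatch i hi1 hi2 hGi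
    obtain ⟨⟨hq1, hq2, hq3⟩, hstrict'⟩ := hmatch i' hi'1 hi'2 hGi'
    have h1 := hstrict' (i + 1) (by omega) (by omega)
    rw [← hq3, ← hpe, hp3] at h1
    omega
  have hinj : ∀ i i' : ℤ, -(n : ℤ) ≤ i → i ≤ (n : ℤ) → Gfun x i = -1 →
      -(n : ℤ) ≤ i' → i' ≤ (n : ℤ) → Gfun x i' = -1 → p i = p i' → i = i' := by
    intro i i' h1 h2 h3 h4 h5 h6 h7
    rcases lt_trichotomy i i' with h | h | h
    · exact absurd h7 fun hh => hinjkey i i' h1 h2 h3 h4 h5 h6 h hh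
    · exact h
    · exact absurd h7.symm fun hh => hinjkey i' i h4 h5 h6 h1 h2 h3 h hh
  -- Step 4: the target point `y0` and its cylinder
  set idx : ℤ → Fin M := fun i =>
    if h : ∃ k, x i = DMSym.ra k then h.choose else ⟨0, hM'⟩ with hidxdef
  have hidx : ∀ (i : ℤ) (k : Fin M), x i = DMSym.ra k → idx i = k := by
    intro i k hk
    have hex : ∃ k', x i = DMSym.ra k' := ⟨k, hk⟩
    simp only [hidxdef]
    rw [dif_pos hex]
    have h3 : DMSym.ra (M := M) (N := N) hex.choose = DMSym.ra k :=
      hex.choose_spec.symm.trans hk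
    exact DMSym.ra.inj h3
  set y0 : ℤ → AlSym M N := fun j =>
    if j < -(n : ℤ) then
      AlSym.la (if h : ∃ i : ℤ, (-(n : ℤ) ≤ i ∧ i ≤ (n : ℤ) ∧ Gfun x i = -1) ∧ p i = j
        then idx h.choose else ⟨0, hM'⟩)
    else phiAl x j with hy0def
  set W : Finset ℤ := Finset.Icc st (n : ℤ) with hWdef
  have hGAl : ∀ (y : ℤ → AlSym M N), (∀ j ∈ W, y j = y0 j) → ∀ b : ℤ, st ≤ b → b ≤ (n : ℤ) →
      GAl y b = if b < -(n : ℤ) then 1 else Gfun x b := by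
    intro y hy b hb1 hb2
    have hyb : y b = y0 b := hy b (Finset.mem_Icc.mpr ⟨hb1, hb2⟩)
    by_cases hb : b < -(n : ℤ)
    · rw [if_pos hb, DMAux.GAl_eq, hyb]
      simp only [hy0def]
      rw [if_pos hb]
    · rw [if_neg hb, DMAux.GAl_eq, hyb]
      simp only [hy0def]
      rw [if_neg hb]
      cases hxb : x b <;> simp [phiAl, Gfun, hxb]
  have hHrel : ∀ (y : ℤ → AlSym M N), (∀ j ∈ W, y j = y0 j) → ∀ a : ℤ, st ≤ a →
      ∀ b : ℤ, a ≤ b → b ≤ (n : ℤ) + 1 → HAl y b - HAl y a = f b - f a := by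
    intro y hy a ha
    refine Int.le_induction ?_ ?_
    · intro _
      ring
    · intro b hb ih hb2
      have h1 := DMAux.HAl_step y b
      have h2 := hGAl y hy b (by omega) (by omega)
      have h3 := hstep b (by omega) (by omega)
      have h4 := ih (by omega)
      rw [h2] at h1
      by_cases hbn : b < -(n : ℤ)
      · rw [if_pos hbn] at h1 h3
        omega
      · rw [if_neg hbn] at h1 h3
        omega
  -- Step 5: correctness of `ψ_α` on the cylinder
  have hcorrect : ∀ y : ℤ → AlSym M N, (∀ j ∈ W, y j = y0 j) →
      ∀ i : ℤ, -(n : ℤ) ≤ i → i ≤ (n : ℤ) → psiAl M N hM' y i = x i := by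
    intro y hy i hi1 hi2
    have hyi : y i = y0 i := hy i (Finset.mem_Icc.mpr ⟨by omega, hi2⟩)
    have hy0i : y0 i = phiAl x i := by
      simp only [hy0def]
      rw [if_neg (by omega)]
    cases hxi : x i with
    | la k =>
      have hyla : y i = AlSym.la k := by
        rw [hyi, hy0i]
        simp [phiAl, hxi]
      simp only [psiAl, hyla, hxi]
    | u k =>
      have hyu : y i = AlSym.u k := by
        rw [hyi, hy0i]
        simp [phiAl, hxi]
      simp only [psiAl, hyu, hxi]
    | ra k =>
      have hyib : y i = AlSym.b := by
        rw [hyi, hy0i]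
        simp [phiAl, hxi]
      have hGi : Gfun x i = -1 := by simp [Gfun, hxi]
      obtain ⟨⟨hp1, hp2, hp3⟩, hstrict⟩ := hmatch i hi1 hi2 hGi
      have hf1 : f (p i + 1) = f (i + 1) + 1 := hpstep i hi1 hi2 hGi
      have hS : sAl y i = p i := by
        show sSup {j : ℤ | j < i + 1 ∧ HAl y j = HAl y (i + 1)} = p i
        have hub : ∀ j ∈ {j : ℤ | j < i + 1 ∧ HAl y j = HAl y (i + 1)}, j ≤ p i := by
          intro j hj
          obtain ⟨hj1, hj2⟩ := hj
          by_contra hc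
          push_neg at hc
          have hji : j ≤ i := by omega
          have h5 := hHrel y hy j (by omega) (i + 1) (by omega) (by omega)
          have h7 := hstrict j hc hji
          omega
        have hmem : p i ∈ {j : ℤ | j < i + 1 ∧ HAl y j = HAl y (i + 1)} := by
          refine ⟨by omega, ?_⟩
          have h5 := hHrel y hy (p i) hp1 (i + 1) (by omega) (by omega)
          omega
        exact le_antisymm (csSup_le ⟨p i, hmem⟩ hub)
          (le_csSup ⟨p i, fun a ha => hub a ha⟩ hmem)
      have hyp : y (p i) = y0 (p i) := hy (p i) (Finset.mem_Icc.mpr ⟨hp1, by omega⟩)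
      by_cases hpre : p i < -(n : ℤ)
      · have hex : ∃ i' : ℤ, (-(n : ℤ) ≤ i' ∧ i' ≤ (n : ℤ) ∧ Gfun x i' = -1) ∧ p i' = p i :=
          ⟨i, ⟨hi1, hi2, hGi⟩, rfl⟩
        have hch : hex.choose = i := by
          obtain ⟨⟨ha1, ha2, ha3⟩, ha4⟩ := hex.choose_spec
          exact hinj _ i ha1 ha2 ha3 hi1 hi2 hGi ha4
        have hyla : y0 (p i) = AlSym.la k := by
          simp only [hy0def]
          rw [if_pos hpre, dif_pos hex, hch, hidx i k hxi]
        simp only [psiAl, hyib, hS, hyp, hyla, hxi]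
      · have hstep_p := hstep (p i) hp1 (by omega)
        rw [if_neg hpre] at hstep_p
        have hG1 : Gfun x (p i) = 1 := by omega
        obtain ⟨k', hk'⟩ : ∃ k', x (p i) = DMSym.la k' := by
          cases hxp : x (p i) with
          | la k' => exact ⟨k', rfl⟩
          | u _ => simp [Gfun, hxp] at hG1
          | ra _ => simp [Gfun, hxp] at hG1
        have hyla : y0 (p i) = AlSym.la k' := by
          simp only [hy0def]
          rw [if_neg hpre]
          simp [phiAl, hk']
        have hfi : f i = f (i + 1) + 1 := by
          have h8 := hstep i (by omega) hi2
          rw [if_neg (by omega)] at h8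
          omega
        have hkk : k' = k := by
          have hred := hxS (p i) i hp2
          have hw : wordAt x (p i) i =
              DMSym.la k' :: (wordAt x (p i + 1) (i - 1) ++ [DMSym.ra k]) := by
            rw [DMAux.wordAt_snoc x (p i) i (le_of_lt hp2),
              DMAux.wordAt_cons x (p i) (i - 1) (by omega), hk', hxi, List.cons_append]
          rw [hw] at hred
          refine DMAux.matched_eq k' k (wordAt x (p i + 1) (i - 1)) ?_ ?_ hred
          · intro q hq
            have hl := DMAux.htL_prefix x (p i + 1) (i - 1) (by omega) q hq
            have hlen : q.length ≤ (i - 1 + 1 - (p i + 1)).toNat := by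
              have h9 := hq.length_le
              rwa [DMAux.wordAt_length] at h9
            have hft : f (p i + 1 + (q.length : ℤ)) - f (p i + 1) =
                Hfun x (p i + 1 + (q.length : ℤ)) - Hfun x (p i + 1) := by
              simp only [hfdef]
              rw [if_neg (by omega), if_neg (by omega)]
              ring
            have htle : p i + 1 + (q.length : ℤ) ≤ i := by omega
            have hge : f (i + 1) + 1 ≤ f (p i + 1 + (q.length : ℤ)) := by
              rcases eq_or_lt_of_le (show p i + 1 ≤ p i + 1 + (q.length : ℤ) by omega)
                with he | hlt
              · rw [← he]
                omega
              · have := hstrict _ (by omega) htle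
                omega
            omega
          · have h0 := DMAux.htL_wordAt x (p i + 1) (i - 1) (by omega)
            rw [show i - 1 + 1 = i by ring] at h0
            have hfrel : f i - f (p i + 1) = Hfun x i - Hfun x (p i + 1) := by
              simp only [hfdef]
              rw [if_neg (by omega), if_neg (by omega)]
              ring
            omega
        rw [hkk] at hyla
        simp only [psiAl, hyib, hS, hyp, hyla, hxi]
  -- Step 6: conclusion
  have hCopen : IsOpen ((W : Set ℤ).pi fun j => ({y0 j} : Set (AlSym M N))) :=
    isOpen_set_pi W.finite_toSet fun j _ => isOpen_discrete _
  have hCne : ((W : Set ℤ).pi fun j => ({y0 j} : Set (AlSym M N))).Nonempty :=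
    ⟨y0, fun j _ => rfl⟩
  have hCsub : ((W : Set ℤ).pi fun j => ({y0 j} : Set (AlSym M N))) ⊆
      psiAl M N hM' ⁻¹' U := by
    intro y hyC
    have hy : ∀ j ∈ W, y j = y0 j := fun j hj => hyC j (Finset.mem_coe.mpr hj)
    refine Set.mem_preimage.mpr (hcylU _ ?_)
    intro j hj1 hj2
    exact hcorrect y hy j hj1 hj2
  have hmeas := DMAux.measurable_psiAl (M := M) (N := N) hM'
  rw [Measure.map_apply hmeas hU.measurableSet]
  calc (0 : ℝ≥0∞) < ν.toMeasure ((W : Set ℤ).pi fun j => ({y0 j} : Set (AlSym M N))) :=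
        hfull _ hCopen hCne
    _ ≤ ν.toMeasure (psiAl M N hM' ⁻¹' U) := measure_mono hCsub
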